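/- arXiv:2306.09280 — 5 statements merged into one kernel-verified Lean document; each statement's English description precedes it below -/
import Mathlib

section
/- If A and B are complementary piles of SET cards (disjoint subsets of Z_3^4 whose union is all of Z_3^4), and S_A, S_B denote the number of sets (3-element zero-sum subsets) contained entirely in A and B respectively, then S_A + S_B = (|A|^2 - 81·|A| + 2160)/2 = (2160 - |A|·|B|)/2. -/
open Finset

abbrev V := Fin 4 → ZMod 3

def g (p : Finset V) : Finset V := insert (-(∑ x ∈ p, x)) p

lemma zmod3_key : ∀ a b : ZMod 3, -(a+b) = a → a = b := by decide

lemma neg_sum_not_mem {p : Finset V} (hp : p.card = 2) : -(∑ x ∈ p, x) ∉ p := by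
  obtain ⟨x, y, hxy, rfl⟩ := Finset.card_eq_two.mp hp
  rw [Finset.sum_pair hxy]
  simp only [Finset.mem_insert, Finset.mem_singleton]
  rintro (h | h)
  · apply hxy
    funext i
    have hi : -(x i + y i) = x i := by simpa using congrFun h i
    exact zmod3_key _ _ hi
  · apply hxy
    funext i
    have hi : -(y i + x i) = y i := by
      have := congrFun h i
      simp at this
      linear_combination this
    exact (zmod3_key _ _ hi).symm

lemma g_card {p : Finset V} (hp : p.card = 2) : (g p).card = 3 := by
  rw [g, Finset.card_insert_of_notMem (neg_sum_not_mem hp), hp]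

lemma g_sum {p : Finset V} (hp : p.card = 2) : ∑ x ∈ g p, x = 0 := by
  rw [g, Finset.sum_insert (neg_sum_not_mem hp)]
  ring

lemma g_eq_iff {p S : Finset V} (hp : p.card = 2) (hS : S.card = 3)
    (hsum : ∑ x ∈ S, x = 0) : g p = S ↔ p ⊆ S := by
  constructor
  · rintro rfl
    exact Finset.subset_insert _ _
  · intro hps
    have hcd : (S \ p).card = 1 := by rw [Finset.card_sdiff_of_subset hps, hS, hp]
    obtain ⟨z, hz⟩ := Finset.card_eq_one.mp hcd
    have hzp : z ∉ p := by
      have : z ∈ S \ p := hz ▸ Finset.mem_singleton_self z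
      exact (Finset.mem_sdiff.mp this).2
    have hSzp : S = insert z p := by
      rw [Finset.insert_eq, ← hz, Finset.union_comm, Finset.union_sdiff_of_subset hps]
    have hzs : z + ∑ x ∈ p, x = 0 := by
      have := Finset.sum_insert (f := fun x : V => x) hzp
      rw [← hSzp, hsum] at this
      exact this.symm
    have hzv : z = -(∑ x ∈ p, x) := by linear_combination hzs
    rw [g, ← hzv, hSzp]

lemma count_pairs (T : Finset (Finset V))
    (hT : ∀ S, S ∈ T ↔ (S.card = 3 ∧ ∑ x ∈ S, x = 0)) (C : Finset V) :
    C.card.choose 2 = ∑ S ∈ T, (S ∩ C).card.choose 2 := by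
  have hmap : ∀ p ∈ C.powersetCard 2, g p ∈ T := by
    intro p hp
    rw [Finset.mem_powersetCard] at hp
    exact (hT _).mpr ⟨g_card hp.2, g_sum hp.2⟩
  have h := Finset.card_eq_sum_card_fiberwise hmap
  rw [Finset.card_powersetCard] at h
  rw [h]
  refine Finset.sum_congr rfl fun S hS => ?_
  obtain ⟨hS3, hSsum⟩ := (hT _).mp hS
  have hfib : (C.powersetCard 2).filter (fun p => g p = S) = (S ∩ C).powersetCard 2 := by
    ext p
    simp only [Finset.mem_filter, Finset.mem_powersetCard, Finset.subset_inter_iff]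
    constructor
    · rintro ⟨⟨hpc, hp2⟩, hgp⟩
      exact ⟨⟨(g_eq_iff hp2 hS3 hSsum).mp hgp, hpc⟩, hp2⟩
    · rintro ⟨⟨hps, hpc⟩, hp2⟩
      exact ⟨⟨hpc, hp2⟩, (g_eq_iff hp2 hS3 hSsum).mpr hps⟩
  rw [hfib, Finset.card_powersetCard]

lemma T_card (T : Finset (Finset V))
    (hT : ∀ S, S ∈ T ↔ (S.card = 3 ∧ ∑ x ∈ S, x = 0)) : T.card = 1080 := by
  have h := count_pairs T hT Finset.univ
  have huniv : (Finset.univ : Finset V).card = 81 := by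
    rw [Finset.card_univ]
    rw [show Fintype.card V = 81 by simp [Fintype.card_fun]]
  rw [huniv] at h
  have h2 : ∑ S ∈ T, (S ∩ Finset.univ).card.choose 2 = ∑ S ∈ T, 3 := by
    refine Finset.sum_congr rfl fun S hS => ?_
    rw [Finset.inter_univ, ((hT _).mp hS).1]
    decide
  rw [h2, Finset.sum_const, smul_eq_mul] at h
  rw [show Nat.choose 81 2 = 3240 from by decide] at h
  omega

lemma two_choose_two (n : ℕ) : (2 * n.choose 2 : ℤ) = n^2 - n := by
  induction n with
  | zero => simp
  | succ k ih =>
    simp only [Nat.choose_succ_succ, Nat.choose_one_right]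
    push_cast at ih ⊢
    ring_nf
    ring_nf at ih
    linarith

theorem complementary_piles_set_count
    (A B : Finset (Fin 4 → ZMod 3))
    (hdisj : Disjoint A B) (hunion : A ∪ B = Finset.univ)
    (SA SB : ℕ)
    (hSA : SA = ((A.powersetCard 3).filter
      (fun S : Finset (Fin 4 → ZMod 3) => ∑ x ∈ S, x = 0)).card)
    (hSB : SB = ((B.powersetCard 3).filter
      (fun S : Finset (Fin 4 → ZMod 3) => ∑ x ∈ S, x = 0)).card) :
    (2 * (SA + SB) : ℤ) = (A.card : ℤ) ^ 2 - 81 * A.card + 2160 ∧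
    (2 * (SA + SB) : ℤ) = 2160 - (A.card : ℤ) * B.card := by
  obtain ⟨T, hT⟩ : ∃ T : Finset (Finset V),
      ∀ S, S ∈ T ↔ (S.card = 3 ∧ ∑ x ∈ S, x = 0) := by
    refine ⟨(Finset.univ.powersetCard 3).filter (fun S => ∑ x ∈ S, x = 0), fun S => ?_⟩
    simp [Finset.mem_filter, Finset.mem_powersetCard]
  -- SA, SB as filters of T
  have hSA' : SA = (T.filter (fun S => S ⊆ A)).card := by
    rw [hSA]
    congr 1
    ext S
    simp only [Finset.mem_filter, Finset.mem_powersetCard, hT]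
    tauto
  have hSB' : SB = (T.filter (fun S => S ⊆ B)).card := by
    rw [hSB]
    congr 1
    ext S
    simp only [Finset.mem_filter, Finset.mem_powersetCard, hT]
    tauto
  -- per-set identity
  have key : ∀ S ∈ T, (S ∩ A).card.choose 2 + (S ∩ B).card.choose 2 =
      2 * (if S ⊆ A then 1 else 0) + 2 * (if S ⊆ B then 1 else 0) + 1 := by
    intro S hS
    obtain ⟨hS3, -⟩ := (hT _).mp hS
    have hd : Disjoint (S ∩ A) (S ∩ B) :=
      hdisj.mono (Finset.inter_subset_right) (Finset.inter_subset_right)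
    have hu : (S ∩ A) ∪ (S ∩ B) = S := by
      rw [← Finset.inter_union_distrib_left, hunion, Finset.inter_univ]
    have hij : (S ∩ A).card + (S ∩ B).card = 3 := by
      rw [← Finset.card_union_of_disjoint hd, hu, hS3]
    have hiA : S ⊆ A ↔ (S ∩ A).card = 3 := by
      constructor
      · intro h; rw [Finset.inter_eq_left.mpr h, hS3]
      · intro h
        have hsub : S ⊆ S ∩ A := Finset.subset_of_eq
          (Finset.eq_of_subset_of_card_le Finset.inter_subset_left (by omega)).symm
        exact hsub.trans Finset.inter_subset_right
    have hiB : S ⊆ B ↔ (S ∩ B).card = 3 := by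
      constructor
      · intro h; rw [Finset.inter_eq_left.mpr h, hS3]
      · intro h
        have hsub : S ⊆ S ∩ B := Finset.subset_of_eq
          (Finset.eq_of_subset_of_card_le Finset.inter_subset_left (by omega)).symm
        exact hsub.trans Finset.inter_subset_right
    by_cases hA3 : S ⊆ A
    · have hi := hiA.mp hA3
      have hB3 : ¬ S ⊆ B := fun hB => by have := hiB.mp hB; omega
      have hj : (S ∩ B).card = 0 := by omega
      rw [hi, hj, if_pos hA3, if_neg hB3]
      decide
    · by_cases hB3 : S ⊆ B
      · have hj := hiB.mp hB3
        have hi : (S ∩ A).card = 0 := by omega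
        rw [hi, hj, if_pos hB3, if_neg hA3]
        decide
      · have hi : (S ∩ A).card ≠ 3 := fun h => hA3 (hiA.mpr h)
        have hj : (S ∩ B).card ≠ 3 := fun h => hB3 (hiB.mpr h)
        rw [if_neg hA3, if_neg hB3]
        have h0A : (S ∩ A).card ≠ 0 := by
          intro h0
          exact hj (by omega)
        have h12 : (S ∩ A).card = 1 ∨ (S ∩ A).card = 2 := by omega
        rcases h12 with h | h
        · rw [h, show (S ∩ B).card = 2 by omega]
          decide
        · rw [h, show (S ∩ B).card = 1 by omega]
          decide
  -- sum it up
  have hsum : A.card.choose 2 + B.card.choose 2 = 2 * SA + 2 * SB + T.card := by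
    rw [count_pairs T hT A, count_pairs T hT B, ← Finset.sum_add_distrib]
    rw [Finset.sum_congr rfl key]
    rw [Finset.sum_add_distrib, Finset.sum_add_distrib, ← Finset.mul_sum, ← Finset.mul_sum,
      Finset.sum_boole, Finset.sum_boole, Finset.sum_const, smul_eq_mul, mul_one]
    simp only [Nat.cast_id]
    rw [hSA', hSB']
  have hTc := T_card T hT
  have hcards : A.card + B.card = 81 := by
    have := Finset.card_union_of_disjoint hdisj
    rw [hunion, Finset.card_univ] at this
    rw [show Fintype.card V = 81 by simp [Fintype.card_fun]] at this
    omega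
  -- to integers
  have hz : (A.card.choose 2 : ℤ) + (B.card.choose 2 : ℤ)
      = 2 * SA + 2 * SB + 1080 := by
    rw [hTc] at hsum
    exact_mod_cast congrArg (Nat.cast : ℕ → ℤ) hsum
  have h2A := two_choose_two A.card
  have h2B := two_choose_two B.card
  have hcz : (A.card : ℤ) + B.card = 81 := by exact_mod_cast hcards
  have hb : (B.card : ℤ) = 81 - A.card := by linarith
  have hbsq : (B.card : ℤ)^2 = 6561 - 162 * A.card + (A.card : ℤ)^2 := by
    rw [hb]; ring
  have hab : (A.card : ℤ) * B.card = 81 * A.card - (A.card : ℤ)^2 := by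
    rw [hb]; ring
  constructor
  · linarith
  · linarith
end

section
/- Let P(n) be the probability that n distinct nonzero vectors of Z_2^6, chosen uniformly at random, sum to zero. Then P(n+1) = (1 - P(n) - n·P(n-1)) / (63 - n) for 2 ≤ n ≤ 62. -/
def numMatched (n : ℕ) : ℕ :=
  (((Finset.univ.filter (fun x : Fin 6 → ZMod 2 => x ≠ 0)).powersetCard n).filter
    (fun S => ∑ x ∈ S, x = 0)).card

noncomputable def P (n : ℕ) : ℚ := (numMatched n : ℚ) / (Nat.choose 63 n : ℚ)

private abbrev Vc := Fin 6 → ZMod 2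

private lemma Vc_add_self (v : Vc) : v + v = 0 := by
  funext i; exact CharTwo.add_self_eq_zero _

private lemma Vc_neg (v : Vc) : -v = v := by
  rw [neg_eq_iff_add_eq_zero, Vc_add_self]

private lemma cardOmega : (Finset.univ.filter (fun x : Vc => x ≠ 0)).card = 63 := by decide

private lemma key_count (n : ℕ) (h1 : 1 ≤ n) :
    (n + 1) * numMatched (n + 1) + (64 - n) * numMatched (n - 1) + numMatched n
      = Nat.choose 63 n := by
  classical
  set Ω : Finset Vc := Finset.univ.filter (fun x : Vc => x ≠ 0) with hΩ
  have hvΩ : ∀ v : Vc, v ∈ Ω ↔ v ≠ 0 := by intro v; simp [hΩ]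
  -- total count
  have htot : (Ω.powersetCard n).card = Nat.choose 63 n := by
    rw [Finset.card_powersetCard, cardOmega]
  -- split by zero-sum or not
  have hsplit1 :
      ((Ω.powersetCard n).filter (fun S => ∑ x ∈ S, x = 0)).card +
        ((Ω.powersetCard n).filter (fun S => ¬ (∑ x ∈ S, x = 0))).card
      = (Ω.powersetCard n).card :=
    Finset.card_filter_add_card_filter_not _
  set B : Finset (Finset Vc) :=
    (Ω.powersetCard n).filter (fun S => ¬ (∑ x ∈ S, x = 0)) with hB
  have hsplit2 :
      (B.filter (fun S => (∑ x ∈ S, x) ∈ S)).card +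
        (B.filter (fun S => ¬ ((∑ x ∈ S, x) ∈ S))).card = B.card :=
    Finset.card_filter_add_card_filter_not _
  have hmemB : ∀ S, S ∈ B ↔ S ⊆ Ω ∧ S.card = n ∧ (∑ x ∈ S, x) ≠ 0 := by
    intro S
    simp [hB, Finset.mem_powersetCard, and_assoc]
  -- Part 1 : subsets whose sum is NOT a member, biject with pairs (T, v), T an
  -- (n+1)-element zero-sum subset and v ∈ T
  set A1 : Finset (Finset Vc) :=
    (Ω.powersetCard (n+1)).filter (fun S => ∑ x ∈ S, x = 0) with hA1
  have hcard1 :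
      (B.filter (fun S => ¬ ((∑ x ∈ S, x) ∈ S))).card = (A1.sigma (fun T => T)).card := by
    apply Finset.card_bij
      (fun S _ => (⟨insert (∑ x ∈ S, x) S, ∑ x ∈ S, x⟩ : Σ _ : Finset Vc, Vc))
    · intro S hS
      rw [Finset.mem_filter] at hS
      obtain ⟨hSB, hnot⟩ := hS
      rw [hmemB] at hSB
      obtain ⟨hsub, hcard, hsum⟩ := hSB
      rw [Finset.mem_sigma]
      refine ⟨?_, Finset.mem_insert_self _ _⟩
      rw [hA1, Finset.mem_filter, Finset.mem_powersetCard]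
      refine ⟨⟨Finset.insert_subset ((hvΩ _).2 hsum) hsub, ?_⟩, ?_⟩
      · rw [Finset.card_insert_of_notMem hnot, hcard]
      · rw [Finset.sum_insert hnot]
        exact Vc_add_self _
    · intro S hS S' hS' heq
      rw [Finset.mem_filter] at hS hS'
      have h1' : ∑ x ∈ S, x = ∑ x ∈ S', x := by
        have := congrArg Sigma.snd heq; simpa using this
      have h2' : insert (∑ x ∈ S, x) S = insert (∑ x ∈ S', x) S' := by
        have := congrArg Sigma.fst heq; simpa using this
      calc S = (insert (∑ x ∈ S, x) S).erase (∑ x ∈ S, x) :=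
              (Finset.erase_insert hS.2).symm
        _ = (insert (∑ x ∈ S', x) S').erase (∑ x ∈ S', x) := by rw [h2', h1']
        _ = S' := Finset.erase_insert hS'.2
    · rintro ⟨T, v⟩ hTv
      rw [Finset.mem_sigma] at hTv
      obtain ⟨hT, hv⟩ := hTv
      rw [hA1, Finset.mem_filter, Finset.mem_powersetCard] at hT
      obtain ⟨⟨hTsub, hTcard⟩, hTsum⟩ := hT
      have hsum : ∑ x ∈ T.erase v, x = v := by
        have h := Finset.sum_erase_add T (fun x => x) hv
        rw [hTsum] at h
        rw [eq_neg_of_add_eq_zero_left h, Vc_neg]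
      refine ⟨T.erase v, ?_, ?_⟩
      · rw [Finset.mem_filter, hmemB, hsum]
        refine ⟨⟨(Finset.erase_subset _ _).trans hTsub, ?_, (hvΩ v).1 (hTsub hv)⟩,
          Finset.notMem_erase _ _⟩
        rw [Finset.card_erase_of_mem hv, hTcard]; rfl
      · simp only [hsum, Finset.insert_erase hv]
  have hA1card : (A1.sigma (fun T => T)).card = (n + 1) * numMatched (n + 1) := by
    rw [Finset.card_sigma]
    have : ∀ T ∈ A1, T.card = n + 1 := by
      intro T hT
      rw [hA1, Finset.mem_filter, Finset.mem_powersetCard] at hT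
      exact hT.1.2
    rw [Finset.sum_congr rfl this, Finset.sum_const, smul_eq_mul, mul_comm]
    rfl
  -- Part 2 : subsets whose sum IS a member, biject with pairs (U, v), U an
  -- (n-1)-element zero-sum subset and v ∈ Ω \ U
  set A2 : Finset (Finset Vc) :=
    (Ω.powersetCard (n-1)).filter (fun S => ∑ x ∈ S, x = 0) with hA2
  have hcard2 :
      (B.filter (fun S => (∑ x ∈ S, x) ∈ S)).card = (A2.sigma (fun U => Ω \ U)).card := by
    apply Finset.card_bij
      (fun S _ => (⟨S.erase (∑ x ∈ S, x), ∑ x ∈ S, x⟩ : Σ _ : Finset Vc, Vc))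
    · intro S hS
      rw [Finset.mem_filter] at hS
      obtain ⟨hSB, hmem⟩ := hS
      rw [hmemB] at hSB
      obtain ⟨hsub, hcard, hsum⟩ := hSB
      rw [Finset.mem_sigma]
      constructor
      · rw [hA2, Finset.mem_filter, Finset.mem_powersetCard]
        refine ⟨⟨(Finset.erase_subset _ _).trans hsub, ?_⟩, ?_⟩
        · rw [Finset.card_erase_of_mem hmem, hcard]
        · have h := Finset.sum_erase_add S (fun x => x) hmem
          exact add_right_cancel (h.trans (zero_add (∑ x ∈ S, x)).symm)
      · rw [Finset.mem_sdiff]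
        exact ⟨(hvΩ _).2 hsum, Finset.notMem_erase _ _⟩
    · intro S hS S' hS' heq
      rw [Finset.mem_filter] at hS hS'
      have h1' : ∑ x ∈ S, x = ∑ x ∈ S', x := by
        have := congrArg Sigma.snd heq; simpa using this
      have h2' : S.erase (∑ x ∈ S, x) = S'.erase (∑ x ∈ S', x) := by
        have := congrArg Sigma.fst heq; simpa using this
      calc S = insert (∑ x ∈ S, x) (S.erase (∑ x ∈ S, x)) :=
              (Finset.insert_erase hS.2).symm
        _ = insert (∑ x ∈ S', x) (S'.erase (∑ x ∈ S', x)) := by rw [h2', h1']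
        _ = S' := Finset.insert_erase hS'.2
    · rintro ⟨U, v⟩ hUv
      rw [Finset.mem_sigma] at hUv
      obtain ⟨hU, hv⟩ := hUv
      rw [hA2, Finset.mem_filter, Finset.mem_powersetCard] at hU
      obtain ⟨⟨hUsub, hUcard⟩, hUsum⟩ := hU
      rw [Finset.mem_sdiff] at hv
      obtain ⟨hvΩ', hvU⟩ := hv
      have hsum : ∑ x ∈ insert v U, x = v := by
        rw [Finset.sum_insert hvU, hUsum, add_zero]
      refine ⟨insert v U, ?_, ?_⟩
      · rw [Finset.mem_filter, hmemB, hsum]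
        refine ⟨⟨Finset.insert_subset hvΩ' hUsub, ?_, (hvΩ v).1 hvΩ'⟩,
          Finset.mem_insert_self _ _⟩
        rw [Finset.card_insert_of_notMem hvU, hUcard]
        omega
      · simp only [hsum, Finset.erase_insert hvU]
  have hA2card : (A2.sigma (fun U => Ω \ U)).card = (64 - n) * numMatched (n - 1) := by
    rw [Finset.card_sigma]
    have : ∀ U ∈ A2, (Ω \ U).card = 64 - n := by
      intro U hU
      rw [hA2, Finset.mem_filter, Finset.mem_powersetCard] at hU
      rw [Finset.card_sdiff_of_subset hU.1.1, cardOmega, hU.1.2]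
      omega
    rw [Finset.sum_congr rfl this, Finset.sum_const, smul_eq_mul, mul_comm]
    rfl
  have hM : numMatched n = ((Ω.powersetCard n).filter (fun S => ∑ x ∈ S, x = 0)).card := rfl
  omega

theorem socks_P_recursion (n : ℕ) (h2 : 2 ≤ n) (h62 : n ≤ 62) :
    P (n + 1) = (1 - P n - (n : ℚ) * P (n - 1)) / ((63 : ℚ) - n) := by
  have h1 : 1 ≤ n := by omega
  have hk := key_count n h1
  have hkQ : ((n : ℚ) + 1) * numMatched (n + 1) + (64 - (n : ℚ)) * numMatched (n - 1)
      + numMatched n = Nat.choose 63 n := by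
    have := congrArg (Nat.cast (R := ℚ)) hk
    push_cast [Nat.cast_sub (show n ≤ 64 by omega)] at this
    linarith
  have hA : (Nat.choose 63 (n + 1) : ℚ) ≠ 0 := by
    exact_mod_cast (Nat.choose_pos (show n + 1 ≤ 63 by omega)).ne'
  have hBne : (Nat.choose 63 n : ℚ) ≠ 0 := by
    exact_mod_cast (Nat.choose_pos (show n ≤ 63 by omega)).ne'
  have hCne : (Nat.choose 63 (n - 1) : ℚ) ≠ 0 := by
    exact_mod_cast (Nat.choose_pos (show n - 1 ≤ 63 by omega)).ne'
  have hnlt : (n : ℚ) < 63 := by exact_mod_cast Nat.lt_of_le_of_lt h62 (by norm_num)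
  have h63 : (63 : ℚ) - n ≠ 0 := sub_ne_zero_of_ne hnlt.ne'
  have hrel1 : (Nat.choose 63 (n + 1) : ℚ) * ((n : ℚ) + 1)
      = (Nat.choose 63 n : ℚ) * (63 - (n : ℚ)) := by
    have := Nat.choose_succ_right_eq 63 n
    have := congrArg (Nat.cast (R := ℚ)) this
    push_cast [Nat.cast_sub (show n ≤ 63 by omega)] at this
    linarith
  have hrel2 : (Nat.choose 63 n : ℚ) * (n : ℚ)
      = (Nat.choose 63 (n - 1) : ℚ) * (64 - (n : ℚ)) := by
    have h := Nat.choose_succ_right_eq 63 (n - 1)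
    rw [Nat.sub_add_cancel h1] at h
    have := congrArg (Nat.cast (R := ℚ)) h
    push_cast [Nat.cast_sub (show n - 1 ≤ 63 by omega)] at this
    have hn1 : ((n - 1 : ℕ) : ℚ) = (n : ℚ) - 1 := by
      push_cast [Nat.cast_sub h1]; ring
    rw [hn1] at this
    linarith
  rw [P, P, P]
  rw [div_eq_div_iff hA h63]
  field_simp
  linear_combination (-(numMatched (n+1) : ℚ) * (Nat.choose 63 (n-1) : ℚ)) * hrel1
    + ((Nat.choose 63 (n+1) : ℚ) * (numMatched (n-1) : ℚ)) * hrel2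
    + ((Nat.choose 63 (n+1) : ℚ) * (Nat.choose 63 (n-1) : ℚ)) * hkQ
end

section
/- Let P(n) be the probability that n distinct nonzero vectors of Z_2^6, chosen uniformly at random, sum to zero. Then P(2n) = P(2n-1) for all 1 ≤ n ≤ 31. -/
/-!
Let `G` be an elementary abelian 2-group and `k + 1` even. Pairs `(S, w)` with `S` a zero-sum
`k`-set of nonzero elements and `w ∉ S ∪ {0}` correspond bijectively to pairs `(T, w)` with `T` a
zero-sum `(k + 1)`-set of nonzero elements and `w ∈ T`, via `T = (S ∪ {0}) + w`: translating an
even-size set by `w` preserves its sum, and translation by `w` is an involution moving `0` to `w`.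
Counting the pairs, `(|G| - (k + 1)) · Z(k) = (k + 1) · Z(k + 1)` for the numbers `Z` of such sets,
and for `|G| = 64` the binomials `C(63, k)`, `C(63, k + 1)` are in exactly this ratio.
-/

open Finset

section ElementaryAbelian

variable {G : Type*} [AddCommGroup G]

theorem nsmul_eq_zero_of_even (hG : ∀ x : G, x + x = 0) {m : ℕ} (hm : Even m) (x : G) :
    m • x = 0 := by
  obtain ⟨r, rfl⟩ := hm
  rw [add_nsmul, ← nsmul_add, hG, nsmul_zero]

variable [DecidableEq G]

def zeroSumSubsets (G : Type*) [AddCommGroup G] [Fintype G] [DecidableEq G] (k : ℕ) :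
    Finset (Finset G) :=
  ((univ.filter (fun x : G => x ≠ 0)).powersetCard k).filter (fun S => ∑ x ∈ S, x = 0)

theorem mem_zeroSumSubsets [Fintype G] {k : ℕ} {S : Finset G} :
    S ∈ zeroSumSubsets G k ↔ 0 ∉ S ∧ #S = k ∧ ∑ x ∈ S, x = 0 := by
  simp only [zeroSumSubsets, mem_filter, mem_powersetCard, subset_iff, mem_univ, true_and]
  exact ⟨fun ⟨⟨h0, hk⟩, hs⟩ => ⟨fun h => h0 h rfl, hk, hs⟩,
    fun ⟨h0, hk, hs⟩ => ⟨⟨fun x hx hx0 => h0 (hx0 ▸ hx), hk⟩, hs⟩⟩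

theorem sum_image_add_right (S : Finset G) (w : G) :
    ∑ x ∈ S.image (· + w), x = ∑ x ∈ S, x + #S • w := by
  rw [sum_image (add_left_injective w).injOn, sum_add_distrib, sum_const]

variable (hG : ∀ x : G, x + x = 0)
include hG

theorem mem_image_add_right_iff {S : Finset G} {w y : G} : y ∈ S.image (· + w) ↔ y + w ∈ S := by
  constructor
  · intro hy
    obtain ⟨x, hx, rfl⟩ := mem_image.1 hy
    rwa [add_assoc, hG, add_zero]
  · intro h
    exact mem_image.2 ⟨y + w, h, by rw [add_assoc, hG, add_zero]⟩

theorem image_add_right_image_add_right (S : Finset G) (w : G) :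
    (S.image (· + w)).image (· + w) = S := by
  ext y
  rw [mem_image_add_right_iff hG, mem_image_add_right_iff hG, add_assoc, hG, add_zero]

variable [Fintype G] {k : ℕ} (hk : Even (k + 1))
include hk

theorem image_add_right_insert_zero_mem {S : Finset G} {w : G} (hS : S ∈ zeroSumSubsets G k)
    (hw : w ∉ insert 0 S) : (insert 0 S).image (· + w) ∈ zeroSumSubsets G (k + 1) := by
  obtain ⟨h0, hcard, hsum⟩ := mem_zeroSumSubsets.1 hS
  refine mem_zeroSumSubsets.2 ⟨?_, ?_, ?_⟩
  · rwa [mem_image_add_right_iff hG, zero_add]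
  · rw [card_image_of_injective _ (add_left_injective w), card_insert_of_notMem h0, hcard]
  · rw [sum_image_add_right, sum_insert h0, hsum, card_insert_of_notMem h0, hcard,
      nsmul_eq_zero_of_even hG hk, add_zero, add_zero]

theorem erase_zero_image_add_right_mem {T : Finset G} {w : G}
    (hT : T ∈ zeroSumSubsets G (k + 1)) (hw : w ∈ T) :
    (T.image (· + w)).erase 0 ∈ zeroSumSubsets G k := by
  obtain ⟨-, hcard, hsum⟩ := mem_zeroSumSubsets.1 hT
  have h0 : (0 : G) ∈ T.image (· + w) := by rwa [mem_image_add_right_iff hG, zero_add]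
  refine mem_zeroSumSubsets.2 ⟨notMem_erase 0 _, ?_, ?_⟩
  · rw [card_erase_of_mem h0, card_image_of_injective _ (add_left_injective w), hcard,
      Nat.add_sub_cancel]
  · rw [sum_erase _ (f := fun x : G => x) rfl, sum_image_add_right, hsum, hcard,
      nsmul_eq_zero_of_even hG hk, add_zero]

theorem card_sigma_compl_insert_zero_eq_card_sigma_self :
    #((zeroSumSubsets G k).sigma fun S => (insert 0 S)ᶜ) =
      #((zeroSumSubsets G (k + 1)).sigma fun T => T) := by
  refine card_nbij' (fun p => ⟨(insert 0 p.1).image (· + p.2), p.2⟩)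
    (fun p => ⟨(p.1.image (· + p.2)).erase 0, p.2⟩) ?_ ?_ ?_ ?_
  · rintro ⟨S, w⟩ hp
    obtain ⟨hS, hw⟩ := mem_sigma.1 hp
    rw [mem_compl] at hw
    refine mem_sigma.2 ⟨image_add_right_insert_zero_mem hG hk hS hw, ?_⟩
    rw [mem_image_add_right_iff hG, hG]
    exact mem_insert_self (0 : G) S
  · rintro ⟨T, w⟩ hp
    obtain ⟨hT, hw⟩ := mem_sigma.1 hp
    have h0 := (mem_zeroSumSubsets.1 hT).1
    refine mem_sigma.2 ⟨erase_zero_image_add_right_mem hG hk hT hw, mem_compl.2 ?_⟩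
    dsimp only at hw h0 ⊢
    rw [mem_insert, mem_erase, mem_image_add_right_iff hG, hG]
    rintro (rfl | ⟨-, h0T⟩)
    exacts [h0 hw, h0 h0T]
  · rintro ⟨S, w⟩ hp
    have h0 := (mem_zeroSumSubsets.1 (mem_sigma.1 hp).1).1
    simp only [image_add_right_image_add_right hG, erase_insert h0]
  · rintro ⟨T, w⟩ hp
    have h0 : (0 : G) ∈ T.image (· + w) := by
      rw [mem_image_add_right_iff hG, zero_add]
      exact (mem_sigma.1 hp).2
    simp only [insert_erase h0, image_add_right_image_add_right hG]

theorem card_sub_mul_card_zeroSumSubsets :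
    (Fintype.card G - (k + 1)) * #(zeroSumSubsets G k) =
      (k + 1) * #(zeroSumSubsets G (k + 1)) := by
  have hleft : #((zeroSumSubsets G k).sigma fun S => (insert 0 S)ᶜ) =
      #(zeroSumSubsets G k) * (Fintype.card G - (k + 1)) := by
    refine (card_sigma _ _).trans (sum_const_nat fun S hS => ?_)
    obtain ⟨h0, hcard, -⟩ := mem_zeroSumSubsets.1 hS
    rw [card_compl, card_insert_of_notMem h0, hcard]
  have hright : #((zeroSumSubsets G (k + 1)).sigma fun T => T) =
      #(zeroSumSubsets G (k + 1)) * (k + 1) :=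
    (card_sigma _ _).trans (sum_const_nat fun T hT => (mem_zeroSumSubsets.1 hT).2.1)
  rw [mul_comm, ← hleft, card_sigma_compl_insert_zero_eq_card_sigma_self hG hk, hright, mul_comm]

end ElementaryAbelian

theorem div_choose_succ_eq_div_choose {m k a b : ℕ} (hk : k < m) (h : (m - k) * a = (k + 1) * b) :
    (b : ℚ) / m.choose (k + 1) = a / m.choose k := by
  have hC : m.choose (k + 1) * (k + 1) = m.choose k * (m - k) := Nat.choose_succ_right_eq m k
  have hcross : b * m.choose k = a * m.choose (k + 1) := by
    refine Nat.eq_of_mul_eq_mul_left k.succ_pos ?_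
    calc (k + 1) * (b * m.choose k) = m.choose k * ((k + 1) * b) := by ring
      _ = m.choose k * (m - k) * a := by rw [← h, mul_assoc]
      _ = (k + 1) * (a * m.choose (k + 1)) := by rw [← hC]; ring
  rw [div_eq_div_iff (by exact_mod_cast (Nat.choose_pos hk).ne') (by exact_mod_cast
    (Nat.choose_pos hk.le).ne')]
  exact_mod_cast hcross

theorem socks_P_even_eq_odd (n : ℕ) (h1 : 1 ≤ n) (h31 : n ≤ 31) :
    P (2 * n) = P (2 * n - 1) := by
  have hn : 2 * n - 1 + 1 = 2 * n := by omega
  have hG : ∀ x : Fin 6 → ZMod 2, x + x = 0 :=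
    fun x => funext fun i => CharTwo.add_self_eq_zero (x i)
  have hcount := card_sub_mul_card_zeroSumSubsets hG (k := 2 * n - 1) (hn ▸ even_two_mul n)
  have hcard : Fintype.card (Fin 6 → ZMod 2) = 63 + 1 := by simp
  rw [hcard, Nat.add_sub_add_right] at hcount
  have hM : ∀ k, numMatched k = #(zeroSumSubsets (Fin 6 → ZMod 2) k) := fun _ => rfl
  have hratio := div_choose_succ_eq_div_choose (by omega) hcount
  rwa [hn, ← hM, ← hM] at hratio
end

section
/- Let P(n) be the probability that n uniformly random distinct nonzero vectors of Z_2^6 sum to zero. Then P(2n+1) = 1/64 - (-1)^n · (2n+1)!! · (61-2n)!! / (64 · 61!!) for 0 ≤ n ≤ 30. -/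
namespace SocksAux


abbrev V : Type := Fin 6 → ZMod 2

def good (n : ℕ) : Finset (Finset V) :=
  ((Finset.univ.filter (fun x : V => x ≠ 0)).powersetCard n).filter
    (fun S => ∑ x ∈ S, x = 0)

lemma self_add (x : V) : x + x = 0 := by funext i; exact CharTwo.add_self_eq_zero _

lemma odd_smul (k : ℕ) (x : V) : (2*k+1) • x = x := by
  rw [add_smul, mul_comm, mul_smul, two_smul]
  simp [self_add]

lemma mem_good {n : ℕ} {S : Finset V} :
    S ∈ good n ↔ S.card = n ∧ (∀ x ∈ S, x ≠ 0) ∧ ∑ x ∈ S, x = 0 := by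
  simp only [good, Finset.mem_filter, Finset.mem_powersetCard, Finset.subset_iff,
    Finset.mem_filter, Finset.mem_univ, true_and]
  tauto

lemma card_nonzero : (Finset.univ.filter (fun x : V => x ≠ 0)).card = 63 := by
  rw [Finset.filter_ne']
  simp [Finset.card_erase_of_mem]

lemma addInj (x : V) : Function.Injective (· + x) := fun a b h => by
  have := congrArg (· + x) h
  simpa [add_assoc, self_add] using this

lemma add_cancel (t x : V) : t + x + x = t := by rw [add_assoc, self_add, add_zero]

lemma lemA (m : ℕ) :
    (2*m+2) * (good (2*m+2)).card = (62-2*m) * (good (2*m+1)).card := by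
  have h1 : ((good (2*m+2)).sigma (fun S => S)).card = (2*m+2) * (good (2*m+2)).card := by
    rw [Finset.card_sigma, Finset.sum_congr rfl (fun S hS => (mem_good.mp hS).1),
      Finset.sum_const, smul_eq_mul, mul_comm]
  have h2 : ((good (2*m+1)).sigma
        (fun T => Finset.univ.filter (fun x : V => x ≠ 0 ∧ x ∉ T))).card
      = (62-2*m) * (good (2*m+1)).card := by
    rw [Finset.card_sigma]
    have : ∀ T ∈ good (2*m+1),
        (Finset.univ.filter (fun x : V => x ≠ 0 ∧ x ∉ T)).card = 62-2*m := by
      intro T hT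
      obtain ⟨hc, hnz, -⟩ := mem_good.mp hT
      have hsub : T ⊆ Finset.univ.filter (fun x : V => x ≠ 0) := by
        intro x hx; simp [hnz x hx]
      have : (Finset.univ.filter (fun x : V => x ≠ 0 ∧ x ∉ T))
          = (Finset.univ.filter (fun x : V => x ≠ 0)) \ T := by
        ext x; simp [Finset.mem_sdiff]
      rw [this, Finset.card_sdiff_of_subset hsub, card_nonzero, hc]
      omega
    rw [Finset.sum_congr rfl this, Finset.sum_const, smul_eq_mul, mul_comm]
  rw [← h1, ← h2]
  apply Finset.card_bij (fun p _ => (⟨(p.1.erase p.2).image (· + p.2), p.2⟩ :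
    (_ : Finset V) × V))
  · rintro ⟨S, x⟩ hp
    rw [Finset.mem_sigma] at hp
    obtain ⟨hS, hx⟩ := hp
    dsimp only at hS hx ⊢
    obtain ⟨hc, hnz, hsum⟩ := mem_good.mp hS
    rw [Finset.mem_sigma]
    constructor
    · rw [mem_good]
      refine ⟨?_, ?_, ?_⟩
      · rw [Finset.card_image_of_injective _ (addInj x), Finset.card_erase_of_mem hx, hc]
        omega
      · intro y hy
        obtain ⟨z, hz, rfl⟩ := Finset.mem_image.mp hy
        intro h0
        have : z = x := by
          have := congrArg (· + x) h0
          simpa [add_cancel] using this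
        exact (Finset.ne_of_mem_erase hz) this
      · rw [Finset.sum_image (fun a _ b _ h => addInj x h), Finset.sum_add_distrib,
          Finset.sum_const, Finset.card_erase_of_mem hx, hc,
          Finset.sum_erase_eq_sub hx]
        have e : 2*m+2-1 = 2*m+1 := by omega
        rw [e, odd_smul, hsum, zero_sub,
          neg_eq_of_add_eq_zero_left (self_add x), self_add]
    · simp only [Finset.mem_filter, Finset.mem_univ, true_and]
      refine ⟨hnz x hx, ?_⟩
      intro hmem
      obtain ⟨z, hz, hzx⟩ := Finset.mem_image.mp hmem
      have : z = 0 := by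
        have := congrArg (· + x) hzx
        simpa [add_cancel, self_add] using this
      exact hnz z (Finset.mem_of_mem_erase hz) this
  · rintro ⟨S, x⟩ hp ⟨S', x'⟩ hp' heq
    dsimp only at heq
    obtain ⟨hx2⟩ : x = x' := congrArg Sigma.snd heq
    have h1 : (S.erase x).image (· + x) = (S'.erase x).image (· + x) := by
      have := congrArg Sigma.fst heq
      simpa using this
    have h2 : S.erase x = S'.erase x :=
      Finset.image_injective (addInj x) h1
    rw [Finset.mem_sigma] at hp hp'
    have hxS : x ∈ S := hp.2
    have hxS' : x ∈ S' := hp'.2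
    have : S = S' := by
      rw [← Finset.insert_erase hxS, h2, Finset.insert_erase hxS']
    simp [this]
  · rintro ⟨T, x⟩ hq
    rw [Finset.mem_sigma] at hq
    obtain ⟨hT, hx⟩ := hq
    dsimp only at hT hx
    simp only [Finset.mem_filter, Finset.mem_univ, true_and] at hx
    obtain ⟨hx0, hxT⟩ := hx
    obtain ⟨hc, hnz, hsum⟩ := mem_good.mp hT
    have hxim : x ∉ T.image (· + x) := by
      intro hmem
      obtain ⟨t, ht, htx⟩ := Finset.mem_image.mp hmem
      have : t = 0 := by
        have := congrArg (· + x) htx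
        simpa [add_cancel, self_add] using this
      exact hnz t ht this
    refine ⟨⟨insert x (T.image (· + x)), x⟩, ?_, ?_⟩
    · rw [Finset.mem_sigma]
      refine ⟨mem_good.mpr ⟨?_, ?_, ?_⟩, Finset.mem_insert_self _ _⟩
      · rw [Finset.card_insert_of_notMem hxim,
          Finset.card_image_of_injective _ (addInj x), hc]
      · intro y hy
        rcases Finset.mem_insert.mp hy with rfl | hy
        · exact hx0
        · obtain ⟨t, ht, rfl⟩ := Finset.mem_image.mp hy
          intro h0
          have : t = x := by
            have := congrArg (· + x) h0
            simpa [add_cancel] using this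
          exact hxT (this ▸ ht)
      · rw [Finset.sum_insert hxim, Finset.sum_image (fun a _ b _ h => addInj x h),
          Finset.sum_add_distrib, Finset.sum_const, hc, hsum, odd_smul]
        rw [zero_add, self_add]
    · have herase : (insert x (T.image (· + x))).erase x = T.image (· + x) :=
        Finset.erase_insert hxim
      have : ((insert x (T.image (· + x))).erase x).image (· + x) = T := by
        rw [herase, Finset.image_image]
        have : ((· + x) ∘ (· + x)) = (id : V → V) := by
          funext t; simp [Function.comp, add_cancel]
        rw [this, Finset.image_id]
      dsimp only
      rw [this]

lemma lemB (m : ℕ) :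
    64 * ((good (2*m+1)).card + (good (2*m)).card) = Nat.choose 64 (2*m+1) := by
  set F : V → Finset (Finset V) := fun a =>
    (Finset.univ.powersetCard (2*m+1) : Finset (Finset V)).filter
      (fun S => ∑ x ∈ S, x = a) with hF
  have hcard : (Finset.univ.powersetCard (2*m+1) : Finset (Finset V)).card
      = Nat.choose 64 (2*m+1) := by
    have : Fintype.card V = 64 := by simp
    rw [Finset.card_powersetCard, Finset.card_univ, this]
  have htot : ∑ a : V, (F a).card = Nat.choose 64 (2*m+1) := by
    rw [← hcard]
    rw [Finset.card_eq_sum_card_fiberwise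
      (f := fun S : Finset V => ∑ x ∈ S, x) (t := Finset.univ)
      (fun S _ => Finset.mem_univ _)]
  have hconst : ∀ a : V, (F a).card = (F 0).card := by
    have self_add : ∀ x : V, x + x = 0 := fun x => funext fun i => CharTwo.add_self_eq_zero _
    have addInj : ∀ x : V, Function.Injective (· + x) := fun x a b h => by
      have := congrArg (· + x) h
      simpa [add_assoc, self_add] using this
    have odd_smul : ∀ (k : ℕ) (x : V), (2*k+1) • x = x := fun k x => by
      rw [add_smul, mul_comm, mul_smul, two_smul]; simp [self_add x]
    intro a
    symm
    apply Finset.card_bij (fun S _ => S.image (· + a))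
    · intro S hS
      simp only [hF, Finset.mem_filter, Finset.mem_powersetCard] at hS ⊢
      obtain ⟨⟨-, hc⟩, hsum⟩ := hS
      refine ⟨⟨Finset.subset_univ _, ?_⟩, ?_⟩
      · rw [Finset.card_image_of_injective _ (addInj a), hc]
      · rw [Finset.sum_image (fun x _ y _ h => addInj a h), Finset.sum_add_distrib,
          Finset.sum_const, hc, hsum, odd_smul, zero_add]
    · intro S hS S' hS' h
      exact Finset.image_injective (addInj a) h
    · intro T hT
      simp only [hF, Finset.mem_filter, Finset.mem_powersetCard] at hT
      obtain ⟨⟨-, hc⟩, hsum⟩ := hT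
      refine ⟨T.image (· + a), ?_, ?_⟩
      · simp only [hF, Finset.mem_filter, Finset.mem_powersetCard]
        refine ⟨⟨Finset.subset_univ _, ?_⟩, ?_⟩
        · rw [Finset.card_image_of_injective _ (addInj a), hc]
        · rw [Finset.sum_image (fun x _ y _ h => addInj a h), Finset.sum_add_distrib,
            Finset.sum_const, hc, hsum, odd_smul, self_add]
      · rw [Finset.image_image]
        have hid : ((· + a) ∘ (· + a)) = (id : V → V) := by
          funext t; simp [Function.comp, add_assoc, self_add a]
        rw [hid, Finset.image_id]
  have h64 : (64:ℕ) * (F 0).card = Nat.choose 64 (2*m+1) := by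
    rw [← htot, Finset.sum_congr rfl (fun a _ => hconst a), Finset.sum_const, smul_eq_mul]
    have h2 : (Finset.univ : Finset V).card = 64 := by
      have : Fintype.card V = 64 := by simp
      rw [Finset.card_univ, this]
    rw [h2]
  have hsplit : (F 0).card =
      ((F 0).filter (fun S => (0:V) ∉ S)).card + ((F 0).filter (fun S => ¬ (0:V) ∉ S)).card :=
    (Finset.card_filter_add_card_filter_not (p := fun S => (0:V) ∉ S)).symm
  have hFmem : ∀ (a : V) (S : Finset V),
      S ∈ F a ↔ S.card = 2*m+1 ∧ ∑ x ∈ S, x = a := by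
    intro a S
    simp [hF, Finset.mem_powersetCard]
  have e1 : ((F 0).filter (fun S => (0:V) ∉ S)) = good (2*m+1) := by
    ext S
    simp only [Finset.mem_filter, hFmem, mem_good]
    constructor
    · rintro ⟨⟨hc, hsum⟩, h0⟩
      exact ⟨hc, fun x hx hx0 => h0 (hx0 ▸ hx), hsum⟩
    · rintro ⟨hc, hnz, hsum⟩
      exact ⟨⟨hc, hsum⟩, fun h0 => hnz 0 h0 rfl⟩
  have e2 : ((F 0).filter (fun S => ¬ (0:V) ∉ S)).card = (good (2*m)).card := by
    apply Finset.card_bij (fun S _ => S.erase 0)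
    · intro S hS
      simp only [Finset.mem_filter, hFmem, not_not] at hS
      obtain ⟨⟨hc, hsum⟩, h0⟩ := hS
      rw [mem_good]
      refine ⟨?_, fun x hx => Finset.ne_of_mem_erase hx, ?_⟩
      · rw [Finset.card_erase_of_mem h0, hc]
        omega
      · have := Finset.sum_erase (f := fun x : V => x) S (rfl : (0:V) = 0)
        rw [this, hsum]
    · intro S hS S' hS' h
      simp only [Finset.mem_filter, not_not] at hS hS'
      rw [← Finset.insert_erase hS.2, h, Finset.insert_erase hS'.2]
    · intro T hT
      rw [mem_good] at hT
      obtain ⟨hc, hnz, hsum⟩ := hT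
      have h0T : (0:V) ∉ T := fun h => hnz 0 h rfl
      refine ⟨insert 0 T, ?_, Finset.erase_insert h0T⟩
      simp only [Finset.mem_filter, hFmem, not_not]
      refine ⟨⟨?_, ?_⟩, Finset.mem_insert_self _ _⟩
      · rw [Finset.card_insert_of_notMem h0T, hc]
      · rw [Finset.sum_insert h0T, hsum, add_zero]
  have hF0 : (F 0).card = (good (2*m+1)).card + (good (2*m)).card := by
    rw [hsplit, e1, e2]
  rw [← h64, hF0]

lemma numMatched_eq (n : ℕ) : numMatched n = (good n).card := rfl

lemma good_one : (good 1).card = 0 := by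
  rw [Finset.card_eq_zero]
  apply Finset.eq_empty_of_forall_notMem
  intro S hS
  obtain ⟨hc, hnz, hsum⟩ := mem_good.mp hS
  obtain ⟨x, rfl⟩ := Finset.card_eq_one.mp hc
  rw [Finset.sum_singleton] at hsum
  exact hnz x (Finset.mem_singleton_self x) hsum

end SocksAux

open SocksAux in
theorem socks_P_odd_formula (n : ℕ) (hn : n ≤ 30) :
    P (2 * n + 1) = 1 / 64 -
      (-1 : ℚ) ^ n * (Nat.doubleFactorial (2 * n + 1) : ℚ) *
        (Nat.doubleFactorial (61 - 2 * n) : ℚ) /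
        (64 * (Nat.doubleFactorial 61 : ℚ)) := by
  have hF : ((Nat.doubleFactorial 61 : ℕ) : ℚ) ≠ 0 := by
    exact_mod_cast (Nat.doubleFactorial_pos 61).ne'
  induction n with
  | zero =>
    have h1 : numMatched (2*0+1) = 0 := by rw [numMatched_eq]; exact good_one
    rw [P, h1]
    norm_num [Nat.doubleFactorial]
  | succ k ih =>
    have ihe := ih (by omega)
    -- ℕ-level facts
    have fA := lemA k
    have fB := lemB (k+1)
    have e1 : 2*(k+1)+1 = 2*k+3 := by ring
    have e2 : 2*(k+1) = 2*k+2 := by ring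
    rw [e1, e2] at fB
    have pascal : Nat.choose 64 (2*k+3) =
        Nat.choose 63 (2*k+2) + Nat.choose 63 (2*k+3) := by
      have := Nat.choose_succ_succ 63 (2*k+2)
      norm_num at this
      convert this using 2 <;> omega
    have rBn := Nat.choose_succ_right_eq 63 (2*k+1)
    have rCn := Nat.choose_succ_right_eq 63 (2*k+2)
    -- rewrite the goal indices
    have e3' : 61 - 2*(k+1) = 59 - 2*k := by omega
    rw [e1, e3', P]
    -- ℚ facts with explicit casts
    have hA0 : ((Nat.choose 63 (2*k+1) : ℕ) : ℚ) ≠ 0 := by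
      exact_mod_cast (Nat.choose_pos (by omega : 2*k+1 ≤ 63)).ne'
    have hC30 : ((Nat.choose 63 (2*k+3) : ℕ) : ℚ) ≠ 0 := by
      exact_mod_cast (Nat.choose_pos (by omega : 2*k+3 ≤ 63)).ne'
    have rB : ((Nat.choose 63 (2*k+2) : ℕ) : ℚ) * (2*(k:ℚ)+2)
        = ((Nat.choose 63 (2*k+1) : ℕ) : ℚ) * (62 - 2*(k:ℚ)) := by
      have e : (63:ℕ) - (2*k+1) = 62 - 2*k := by omega
      have e' : 2*k+1+1 = 2*k+2 := by omega
      rw [e, e'] at rBn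
      have h := congrArg (Nat.cast (R := ℚ)) rBn
      push_cast [Nat.cast_sub (show 2*k ≤ 62 by omega)] at h
      linear_combination h
    have rC : ((Nat.choose 63 (2*k+3) : ℕ) : ℚ) * (2*(k:ℚ)+3)
        = ((Nat.choose 63 (2*k+2) : ℕ) : ℚ) * (61 - 2*(k:ℚ)) := by
      have e : (63:ℕ) - (2*k+2) = 61 - 2*k := by omega
      have e' : 2*k+2+1 = 2*k+3 := by omega
      rw [e, e'] at rCn
      have h := congrArg (Nat.cast (R := ℚ)) rCn
      push_cast [Nat.cast_sub (show 2*k ≤ 61 by omega)] at h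
      linear_combination h
    have qA : (2*(k:ℚ)+2) * (numMatched (2*k+2) : ℚ)
        = (62 - 2*(k:ℚ)) * (numMatched (2*k+1) : ℚ) := by
      have h := congrArg (Nat.cast (R := ℚ)) fA
      rw [numMatched_eq, numMatched_eq]
      push_cast [Nat.cast_sub (show 2*k ≤ 62 by omega)] at h
      linear_combination h
    have qB : 64 * ((numMatched (2*k+3) : ℚ) + (numMatched (2*k+2) : ℚ))
        = ((Nat.choose 63 (2*k+2) : ℕ) : ℚ) + ((Nat.choose 63 (2*k+3) : ℕ) : ℚ) := by
      rw [pascal] at fB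
      have h := congrArg (Nat.cast (R := ℚ)) fB
      rw [numMatched_eq, numMatched_eq]
      push_cast at h
      linear_combination h
    have d3 : (((2*k+3).doubleFactorial : ℕ) : ℚ)
        = (2*(k:ℚ)+3) * (((2*k+1).doubleFactorial : ℕ) : ℚ) := by
      have e : 2*k+3 = (2*k+1)+2 := by ring
      rw [e, Nat.doubleFactorial_add_two]
      push_cast
      ring
    have dd : (((61 - 2*k).doubleFactorial : ℕ) : ℚ)
        = (61 - 2*(k:ℚ)) * (((59 - 2*k).doubleFactorial : ℕ) : ℚ) := by
      have e : 61 - 2*k = (59 - 2*k)+2 := by omega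
      rw [e, Nat.doubleFactorial_add_two]
      push_cast [Nat.cast_sub (show 2*k ≤ 59 by omega)]
      ring
    rw [P, div_eq_iff hA0] at ihe
    rw [div_eq_iff hC30]
    -- now generalize all opaque quantities
    generalize hgA : ((Nat.choose 63 (2*k+1) : ℕ) : ℚ) = A at *
    generalize hgB : ((Nat.choose 63 (2*k+2) : ℕ) : ℚ) = B at *
    generalize hgC : ((Nat.choose 63 (2*k+3) : ℕ) : ℚ) = C3 at *
    generalize hgF : ((Nat.doubleFactorial 61 : ℕ) : ℚ) = Fq at *
    generalize hgD : (((2*k+1).doubleFactorial : ℕ) : ℚ) = D1 at *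
    generalize hgE1 : (((61 - 2*k).doubleFactorial : ℕ) : ℚ) = E1 at *
    generalize hgE3 : (((59 - 2*k).doubleFactorial : ℕ) : ℚ) = E3 at *
    generalize hg1 : (numMatched (2*k+1) : ℚ) = g1 at *
    generalize hg2 : (numMatched (2*k+2) : ℚ) = g2 at *
    generalize hg3 : (numMatched (2*k+3) : ℚ) = g3 at *
    -- solve the algebra
    rw [pow_succ, d3]
    have hne : (2*(k:ℚ)+2) ≠ 0 := by
      have h0 : (0:ℚ) ≤ (k:ℚ) := Nat.cast_nonneg k
      intro h; linarith
    have h2 : g2 = (1/64 - (-1:ℚ)^k * D1 * E1 / (64 * Fq)) * B := by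
      apply mul_left_cancel₀ hne
      linear_combination qA + (62 - 2*(k:ℚ))*ihe
        - (1/64 - (-1:ℚ)^k * D1 * E1 / (64 * Fq))*rB
    linear_combination (1/64)*qB - h2 + ((-1:ℚ)^k*D1*B/(64*Fq))*dd
      - ((-1:ℚ)^k*D1*E3/(64*Fq))*rC
end

section
/- A minimal matched set of Socks cards has size between 3 and 7, and every size in {3,4,5,6,7} is attained: there is no zero-sum subset of distinct nonzero vectors of Z_2^6 of size 1 or 2; for each 3 ≤ n ≤ 7 there exists an n-element zero-sum subset with no proper nonempty zero-sum subset; and every zero-sum subset of size at least 8 contains a proper nonempty zero-sum subset. -/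
namespace SocksAux

def e (i : Fin 6) : Fin 6 → ZMod 2 := fun j => if j = i then 1 else 0

lemma sum_e_apply (A : Finset (Fin 6)) (j : Fin 6) :
    (∑ i ∈ A, e i) j = if j ∈ A then 1 else 0 := by
  simp [e, Finset.sum_apply, Finset.sum_ite_eq]

lemma e_inj : Function.Injective e := by
  intro i j h
  by_contra hne
  have h2 := congrFun h i
  simp only [e, if_pos rfl, if_neg hne] at h2
  exact one_ne_zero h2

def I (m : ℕ) : Finset (Fin 6) := Finset.univ.filter (fun i : Fin 6 => (i : ℕ) < m)

def v (m : ℕ) : Fin 6 → ZMod 2 := fun j : Fin 6 => if (j : ℕ) < m then 1 else 0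

def W (m : ℕ) : Finset (Fin 6 → ZMod 2) := insert (v m) ((I m).image e)

lemma v_eq_sum (m : ℕ) : v m = ∑ i ∈ I m, e i := by
  funext j
  rw [sum_e_apply]
  simp [v, I]

lemma card_I (m : ℕ) (hm : m ≤ 6) : (I m).card = m := by
  interval_cases m <;> decide

lemma v_not_mem (m : ℕ) (hm : 2 ≤ m) : v m ∉ (I m).image e := by
  intro h
  obtain ⟨i, _, hi⟩ := Finset.mem_image.mp h
  have e0 := congrFun hi (0 : Fin 6)
  have e1 := congrFun hi (1 : Fin 6)
  simp only [e, v, Fin.val_zero, Fin.val_one] at e0 e1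
  rw [if_pos (show (0:ℕ) < m by omega)] at e0
  rw [if_pos (show (1:ℕ) < m by omega)] at e1
  by_cases h0 : (0 : Fin 6) = i
  · rw [if_neg (show (1 : Fin 6) ≠ i by rw [← h0]; decide)] at e1
    exact one_ne_zero e1.symm
  · rw [if_neg h0] at e0
    exact one_ne_zero e0.symm

lemma subset_image (m : ℕ) (T : Finset (Fin 6 → ZMod 2)) (hT : T ⊆ (I m).image e) :
    ∃ A ⊆ I m, T = A.image e := by
  refine ⟨(I m).filter (fun i => e i ∈ T), Finset.filter_subset _ _, ?_⟩
  ext x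
  simp only [Finset.mem_image, Finset.mem_filter]
  constructor
  · intro hx
    obtain ⟨i, hiI, hie⟩ := Finset.mem_image.mp (hT hx)
    exact ⟨i, ⟨hiI, hie ▸ hx⟩, hie⟩
  · rintro ⟨i, ⟨_, hi⟩, rfl⟩; exact hi

lemma sum_image_e (A : Finset (Fin 6)) : ∑ x ∈ A.image e, x = ∑ i ∈ A, e i :=
  Finset.sum_image (fun _ _ _ _ h => e_inj h)

lemma minimal (m : ℕ) (hm2 : 2 ≤ m) (hm6 : m ≤ 6) :
    ∀ T ⊆ W m, T.Nonempty → (∑ x ∈ T, x = 0) → T = W m := by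
  intro T hTW hTne hTsum
  by_cases hv : v m ∈ T
  · have herase : T.erase (v m) ⊆ (I m).image e := by
      intro x hx
      have hxW := hTW (Finset.mem_of_mem_erase hx)
      rcases Finset.mem_insert.mp hxW with h | h
      · exact absurd h (Finset.ne_of_mem_erase hx)
      · exact h
    obtain ⟨A, hAI, hA⟩ := subset_image m _ herase
    have hsum : v m + ∑ i ∈ A, e i = 0 := by
      have h := Finset.add_sum_erase T (fun x => x) hv
      rw [hA, sum_image_e, hTsum] at h
      exact h
    have key : ∀ j, v m j = (∑ i ∈ A, e i) j := by
      intro j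
      have hj : v m j + (∑ i ∈ A, e i) j = 0 := congrFun hsum j
      have h2 : ∀ a b : ZMod 2, a + b = 0 → a = b := by decide
      exact h2 _ _ hj
    have hAeq : A = I m := by
      apply Finset.eq_of_subset_of_card_le hAI
      have hsub : I m ⊆ A := by
        intro j hj
        have hji : (j : ℕ) < m := by simpa [I] using hj
        have hv' := key j
        rw [sum_e_apply] at hv'
        by_contra hjA
        rw [if_neg hjA] at hv'
        simp only [v, if_pos hji] at hv'
        exact one_ne_zero hv'
      exact Finset.card_le_card hsub
    apply Finset.Subset.antisymm hTW
    intro x hx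
    rcases Finset.mem_insert.mp hx with rfl | hx
    · exact hv
    · rw [← hAeq, ← hA] at hx
      exact Finset.mem_of_mem_erase hx
  · have hsub : T ⊆ (I m).image e := by
      intro x hx
      rcases Finset.mem_insert.mp (hTW hx) with rfl | h
      · exact absurd hx hv
      · exact h
    obtain ⟨A, hAI, hA⟩ := subset_image m _ hsub
    obtain ⟨x, hx⟩ := hTne
    rw [hA] at hx
    obtain ⟨i, hiA, rfl⟩ := Finset.mem_image.mp hx
    rw [hA, sum_image_e] at hTsum
    have hz := congrFun hTsum i
    rw [sum_e_apply, if_pos hiA] at hz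
    exact absurd hz one_ne_zero

end SocksAux

open SocksAux in
theorem minimal_matched_sets_sizes :
    (∀ S : Finset (Fin 6 → ZMod 2), (∀ x ∈ S, x ≠ 0) → (∑ x ∈ S, x = 0) →
      S.card ≠ 1 ∧ S.card ≠ 2) ∧
    (∀ n : ℕ, 3 ≤ n → n ≤ 7 →
      ∃ S : Finset (Fin 6 → ZMod 2), S.card = n ∧ (∀ x ∈ S, x ≠ 0) ∧
        (∑ x ∈ S, x = 0) ∧
        ∀ T ⊆ S, T.Nonempty → (∑ x ∈ T, x = 0) → T = S) ∧
    (∀ S : Finset (Fin 6 → ZMod 2), (∀ x ∈ S, x ≠ 0) → (∑ x ∈ S, x = 0) →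
      8 ≤ S.card →
      ∃ T ⊆ S, T.Nonempty ∧ T ≠ S ∧ ∑ x ∈ T, x = 0) := by
  refine ⟨?_, ?_, ?_⟩
  · intro S hne hsum
    constructor
    · intro h1
      obtain ⟨x, rfl⟩ := Finset.card_eq_one.mp h1
      simp at hsum
      exact hne x (Finset.mem_singleton_self x) hsum
    · intro h2
      obtain ⟨x, y, hxy, rfl⟩ := Finset.card_eq_two.mp h2
      rw [Finset.sum_insert (by simp [hxy]), Finset.sum_singleton] at hsum
      have hxey : x = y := by
        have h2' : ∀ a b : ZMod 2, a + b = 0 → a = b := by decide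
        funext j
        exact h2' _ _ (congrFun hsum j)
      exact hxy hxey
  · intro n hn3 hn7
    set m := n - 1 with hm
    have hm2 : 2 ≤ m := by omega
    have hm6 : m ≤ 6 := by omega
    refine ⟨W m, ?_, ?_, ?_, minimal m hm2 hm6⟩
    · rw [W, Finset.card_insert_of_notMem (v_not_mem m hm2),
        Finset.card_image_of_injective _ e_inj, card_I m hm6]
      omega
    · intro x hx
      rcases Finset.mem_insert.mp hx with rfl | hx
      · intro h
        have h0 := congrFun h (0 : Fin 6)
        simp only [v, Fin.val_zero] at h0
        rw [if_pos (show (0:ℕ) < m by omega)] at h0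
        exact one_ne_zero h0
      · obtain ⟨i, _, rfl⟩ := Finset.mem_image.mp hx
        intro h
        have hz := congrFun h i
        simp [e] at hz
    · rw [W, Finset.sum_insert (v_not_mem m hm2), sum_image_e, ← v_eq_sum]
      have hself : ∀ a : ZMod 2, a + a = 0 := by decide
      funext j
      exact hself _
  · intro S _ _ hcard
    obtain ⟨S', hS'sub, hS'card⟩ := Finset.exists_subset_card_eq (show 7 ≤ S.card by omega)
    have hnli : ¬ LinearIndependent (ZMod 2) (fun x : S' => (x : Fin 6 → ZMod 2)) := by
      intro h
      have := h.fintype_card_le_finrank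
      simp [hS'card] at this
    rw [Fintype.not_linearIndependent_iff] at hnli
    obtain ⟨g, hgsum, i, hgi⟩ := hnli
    refine ⟨(S'.attach.filter (fun x => g x ≠ 0)).image Subtype.val, ?_, ?_, ?_, ?_⟩
    · intro x hx
      obtain ⟨y, _, rfl⟩ := Finset.mem_image.mp hx
      exact hS'sub y.2
    · exact ⟨i, Finset.mem_image.mpr ⟨i, Finset.mem_filter.mpr ⟨Finset.mem_attach _ _, hgi⟩, rfl⟩⟩
    · intro h
      have hle : ((S'.attach.filter (fun x => g x ≠ 0)).image Subtype.val).card ≤ 7 := by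
        calc ((S'.attach.filter (fun x => g x ≠ 0)).image Subtype.val).card
            ≤ (S'.attach.filter (fun x => g x ≠ 0)).card := Finset.card_image_le
          _ ≤ S'.attach.card := Finset.card_filter_le _ _
          _ = 7 := by rw [Finset.card_attach, hS'card]
      rw [h] at hle
      omega
    · rw [Finset.sum_image (fun a _ b _ h => Subtype.ext h)]
      have h1 : ∀ a : ZMod 2, a ≠ 0 → a = 1 := by decide
      have hcongr : ∀ x ∈ S'.attach.filter (fun x => g x ≠ 0),
          (x : Fin 6 → ZMod 2) = g x • (x : Fin 6 → ZMod 2) := by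
        intro x hx
        rw [h1 _ (Finset.mem_filter.mp hx).2, one_smul]
      have hfil : ∑ x ∈ S'.attach.filter (fun x => g x ≠ 0), g x • (x : Fin 6 → ZMod 2)
          = ∑ x ∈ S'.attach, g x • (x : Fin 6 → ZMod 2) := by
        apply Finset.sum_filter_of_ne
        intro x _ hne h0
        exact hne (by rw [h0, zero_smul])
      rw [Finset.sum_congr rfl hcongr, hfil]
      simpa [Finset.univ_eq_attach] using hgsum
end
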